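/- arXiv:2410.00370 — 3 statements merged into one kernel-verified Lean document; each statement's English description precedes it below -/
import Mathlib

section
/- Let P < n, let S ∈ Matrix (Fin P) (Fin n) ℝ, let D, D* ∈ Matrix (Fin P) (Fin P) ℝ, and let s, s* ∈ ℝ. If Sᵀ * D * S + s • (1 : Matrix (Fin n) (Fin n) ℝ) = Sᵀ * D* * S + s* • (1 : Matrix (Fin n) (Fin n) ℝ), then s = s* and Sᵀ * D * S = Sᵀ * D* * S. -/
open Matrix

/-- Identification of the noise variance and the smooth covariance part: if two matrices
of the form SᵀDS + s·I agree (with P < n), the noise scalars agree and the smooth parts agree. -/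
theorem noise_variance_identification
    (P n : ℕ) (hPn : P < n)
    (S : Matrix (Fin P) (Fin n) ℝ) (D Dstar : Matrix (Fin P) (Fin P) ℝ)
    (s sstar : ℝ)
    (h : Sᵀ * D * S + s • (1 : Matrix (Fin n) (Fin n) ℝ) =
         Sᵀ * Dstar * S + sstar • (1 : Matrix (Fin n) (Fin n) ℝ)) :
    s = sstar ∧ Sᵀ * D * S = Sᵀ * Dstar * S := by
  have key : Sᵀ * D * S - Sᵀ * Dstar * S = (sstar - s) • (1 : Matrix (Fin n) (Fin n) ℝ) := by
    rw [sub_smul, sub_eq_sub_iff_add_eq_add, h]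
    abel
  have hs : s = sstar := by
    by_contra hne
    have hc : sstar - s ≠ 0 := sub_ne_zero.mpr (Ne.symm hne)
    have hrank_lhs : (Sᵀ * D * S - Sᵀ * Dstar * S).rank ≤ P := by
      have : Sᵀ * D * S - Sᵀ * Dstar * S = Sᵀ * ((D - Dstar) * S) := by
        rw [Matrix.sub_mul, Matrix.mul_sub, ← Matrix.mul_assoc, ← Matrix.mul_assoc]
      rw [this]
      calc (Sᵀ * ((D - Dstar) * S)).rank ≤ Sᵀ.rank := Matrix.rank_mul_le_left _ _
        _ ≤ P := by simpa using Matrix.rank_le_card_width Sᵀ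
    have hrank_rhs : ((sstar - s) • (1 : Matrix (Fin n) (Fin n) ℝ)).rank = n := by
      have hu : IsUnit ((sstar - s) • (1 : Matrix (Fin n) (Fin n) ℝ)) := by
        rw [Matrix.isUnit_iff_isUnit_det]
        simp [Matrix.det_smul, isUnit_iff_ne_zero, hc]
      simpa using Matrix.rank_of_isUnit _ hu
    rw [key, hrank_rhs] at hrank_lhs
    omega
  refine ⟨hs, ?_⟩
  have : Sᵀ * D * S - Sᵀ * Dstar * S = 0 := by
    rw [key, hs, sub_self, zero_smul]
  exact sub_eq_zero.mp this
end

section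
/- Let N, K, P ≥ 1 and let z : Fin N → Fin K → ℝ. Let C be the real matrix with N rows indexed by i ∈ Fin N and columns indexed by pairs (k, k') with k ≤ k' in Fin K, whose entry in row i and column (k, k) is (z i k)², and in row i and column (k, k') with k < k' is 2·(z i k)·(z i k'). Assume C has rank K(K+1)/2 (full column rank). Let A, A* : Fin K → Fin K → Matrix (Fin P) (Fin P) ℝ satisfy A k k' = A k' k and A* k k' = A* k' k for all k, k'. If for every i ∈ Fin N, ∑_{k} ∑_{k'} (z i k)·(z i k') • A k k' = ∑_{k} ∑_{k'} (z i k)·(z i k') • A* k k', then A k k' = A* k k' for all k, k'. -/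
open Matrix

lemma card_le_pairs (K : ℕ) :
    Fintype.card {p : Fin K × Fin K // p.1 ≤ p.2} = K * (K + 1) / 2 := by
  have h1 : Fintype.card {p : Fin K × Fin K // p.1 ≤ p.2}
      = (Finset.univ.filter (fun p : Fin K × Fin K => p.1 ≤ p.2)).card :=
    Fintype.card_subtype _
  rw [h1]
  have h2 : (Finset.univ.filter (fun p : Fin K × Fin K => p.1 ≤ p.2)).card
      = ∑ k : Fin K, (K - (k : ℕ)) := by
    rw [Finset.card_filter]
    rw [← Finset.univ_product_univ, Finset.sum_product]
    congr 1
    funext k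
    rw [← Finset.card_filter]
    have : (Finset.univ.filter (fun k' : Fin K => k ≤ k')) = Finset.Ici k := by
      ext k'; simp
    rw [this, Fin.card_Ici]
  rw [h2]
  have h3 : ∑ k : Fin K, (K - (k : ℕ)) = ∑ j ∈ Finset.range K, (K - j) := by
    rw [Fin.sum_univ_eq_sum_range]
  have h4 : ∑ j ∈ Finset.range K, (K - j) = ∑ j ∈ Finset.range K, (j + 1) := by
    rw [← Finset.sum_range_reflect]
    apply Finset.sum_congr rfl
    intro j hj; simp at hj; omega
  have h5 : (∑ j ∈ Finset.range (K + 1), j) * 2 = (K + 1) * K := by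
    simpa using Finset.sum_range_id_mul_two (K + 1)
  have h6 : ∑ j ∈ Finset.range (K + 1), j = ∑ j ∈ Finset.range K, (j + 1) := by
    rw [Finset.sum_range_succ']
    simp
  have h7 : (K + 1) * K = K * (K + 1) := Nat.mul_comm _ _
  omega

set_option maxHeartbeats 1000000 in
lemma sum_le_pairs (K : ℕ) (c : Fin K → ℝ) (f : Fin K → Fin K → ℝ)
    (hf : ∀ k k', f k k' = f k' k) :
    ∑ p : {p : Fin K × Fin K // p.1 ≤ p.2},
      (if p.val.1 = p.val.2 then (c p.val.1) ^ 2 else 2 * c p.val.1 * c p.val.2) * f p.val.1 p.val.2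
    = ∑ k : Fin K, ∑ k' : Fin K, (c k * c k') * f k k' := by
  set g : Fin K × Fin K → ℝ := fun p => (c p.1 * c p.2) * f p.1 p.2 with hg
  have hsub : ∑ p : {p : Fin K × Fin K // p.1 ≤ p.2},
      (if p.val.1 = p.val.2 then (c p.val.1) ^ 2 else 2 * c p.val.1 * c p.val.2) * f p.val.1 p.val.2
      = ∑ p ∈ Finset.univ.filter (fun p : Fin K × Fin K => p.1 ≤ p.2),
        (if p.1 = p.2 then (c p.1) ^ 2 else 2 * c p.1 * c p.2) * f p.1 p.2 :=
    (Finset.sum_subtype (p := fun p : Fin K × Fin K => p.1 ≤ p.2)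
      (Finset.univ.filter (fun p : Fin K × Fin K => p.1 ≤ p.2)) (fun x => by simp)
      (fun p : Fin K × Fin K => (if p.1 = p.2 then (c p.1) ^ 2 else 2 * c p.1 * c p.2) * f p.1 p.2)).symm
  rw [hsub]
  have hRHS : ∑ k : Fin K, ∑ k' : Fin K, (c k * c k') * f k k' = ∑ p : Fin K × Fin K, g p := by
    rw [← Finset.sum_product']
    rfl
  rw [hRHS]
  have hswap : ∑ p ∈ Finset.univ.filter (fun p : Fin K × Fin K => ¬ p.1 ≤ p.2), g p
      = ∑ p ∈ Finset.univ.filter (fun p : Fin K × Fin K => p.1 < p.2), g p := by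
    apply Finset.sum_nbij' (fun p => Prod.swap p) (fun p => Prod.swap p)
    · intro p hp; simp at hp ⊢; omega
    · intro p hp; simp at hp ⊢; omega
    · intro p _; simp
    · intro p _; simp
    · intro p _; simp only [hg, Prod.fst_swap, Prod.snd_swap]; rw [hf p.2 p.1]; ring
  have hsplit : ∑ p : Fin K × Fin K, g p
      = ∑ p ∈ Finset.univ.filter (fun p : Fin K × Fin K => p.1 ≤ p.2), g p
      + ∑ p ∈ Finset.univ.filter (fun p : Fin K × Fin K => p.1 < p.2), g p := by
    rw [← hswap, Finset.sum_filter_add_sum_filter_not]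
  rw [hsplit]
  have hL : ∑ p ∈ Finset.univ.filter (fun p : Fin K × Fin K => p.1 ≤ p.2),
      (if p.1 = p.2 then (c p.1) ^ 2 else 2 * c p.1 * c p.2) * f p.1 p.2
      = ∑ p ∈ Finset.univ.filter (fun p : Fin K × Fin K => p.1 ≤ p.2),
        (g p + if p.1 = p.2 then 0 else g p) := by
    apply Finset.sum_congr rfl
    intro p _
    by_cases hpe : p.1 = p.2
    · simp only [if_pos hpe, hg]; rw [hpe]; ring
    · simp only [if_neg hpe, hg]; ring
  rw [hL, Finset.sum_add_distrib]
  congr 1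
  have h1 : ∑ p ∈ Finset.univ.filter (fun p : Fin K × Fin K => p.1 ≤ p.2),
      (if p.1 = p.2 then (0:ℝ) else g p)
      = ∑ p ∈ Finset.univ.filter (fun p : Fin K × Fin K => p.1 ≤ p.2),
      (if ¬ p.1 = p.2 then g p else 0) := by
    apply Finset.sum_congr rfl
    intro p _
    by_cases hpe : p.1 = p.2 <;> simp [hpe]
  rw [h1, ← Finset.sum_filter, Finset.filter_filter]
  congr 1
  ext p
  simp [lt_iff_le_and_ne]

lemma mulVec_injective_of_rank (N K : ℕ)
    (C : Matrix (Fin N) {p : Fin K × Fin K // p.1 ≤ p.2} ℝ)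
    (hCrank : C.rank = K * (K + 1) / 2)
    (x : {p : Fin K × Fin K // p.1 ≤ p.2} → ℝ) (hx : C.mulVec x = 0) : x = 0 := by
  have hrn := LinearMap.finrank_range_add_finrank_ker C.mulVecLin
  rw [Module.finrank_fintype_fun_eq_card, card_le_pairs] at hrn
  rw [Matrix.rank] at hCrank
  have hker : Module.finrank ℝ (LinearMap.ker C.mulVecLin) = 0 := by omega
  have hbot : LinearMap.ker C.mulVecLin = ⊥ := Submodule.finrank_eq_zero.mp hker
  have hmem : x ∈ LinearMap.ker C.mulVecLin := by
    rw [LinearMap.mem_ker]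
    simpa [Matrix.mulVecLin_apply] using hx
  rw [hbot, Submodule.mem_bot] at hmem
  exact hmem

/-- Identification of the covariance components from the allocation-dependent system of
equations, under full column rank of the coefficient matrix `C` built from the
allocation parameters. -/
theorem covariance_components_identification
    (N K P : ℕ) (hN : 1 ≤ N) (hK : 1 ≤ K) (hP : 1 ≤ P)
    (z : Fin N → Fin K → ℝ)
    (C : Matrix (Fin N) {p : Fin K × Fin K // p.1 ≤ p.2} ℝ)
    (hCdef : ∀ (i : Fin N) (p : {p : Fin K × Fin K // p.1 ≤ p.2}),
      C i p = if p.val.1 = p.val.2 then (z i p.val.1) ^ 2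
              else 2 * (z i p.val.1) * (z i p.val.2))
    (hCrank : C.rank = K * (K + 1) / 2)
    (A Astar : Fin K → Fin K → Matrix (Fin P) (Fin P) ℝ)
    (hAsymm : ∀ k k', A k k' = A k' k)
    (hAstarsymm : ∀ k k', Astar k k' = Astar k' k)
    (h : ∀ i : Fin N,
      ∑ k : Fin K, ∑ k' : Fin K, (z i k * z i k') • A k k' =
      ∑ k : Fin K, ∑ k' : Fin K, (z i k * z i k') • Astar k k') :
    ∀ k k' : Fin K, A k k' = Astar k k' := by
  have main : ∀ k k' : Fin K, k ≤ k' → A k k' = Astar k k' := by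
    intro k k' hkk'
    ext q r
    set x : {p : Fin K × Fin K // p.1 ≤ p.2} → ℝ :=
      fun p => A p.val.1 p.val.2 q r - Astar p.val.1 p.val.2 q r with hxdef
    have hx : C.mulVec x = 0 := by
      funext i
      have hent : ∑ k : Fin K, ∑ k' : Fin K, (z i k * z i k') * (A k k' q r) =
          ∑ k : Fin K, ∑ k' : Fin K, (z i k * z i k') * (Astar k k' q r) := by
        have hqr := congrFun (congrFun (h i) q) r
        simpa [Matrix.sum_apply, Matrix.smul_apply, smul_eq_mul] using hqr
      have hmv : C.mulVec x i = ∑ p : {p : Fin K × Fin K // p.1 ≤ p.2}, C i p * x p := by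
        simp [Matrix.mulVec, dotProduct]
      rw [hmv]
      have hC : ∑ p : {p : Fin K × Fin K // p.1 ≤ p.2}, C i p * x p
          = ∑ p : {p : Fin K × Fin K // p.1 ≤ p.2},
            (if p.val.1 = p.val.2 then (z i p.val.1) ^ 2
              else 2 * (z i p.val.1) * (z i p.val.2)) *
            (A p.val.1 p.val.2 q r - Astar p.val.1 p.val.2 q r) := by
        apply Finset.sum_congr rfl
        intro p _
        rw [hCdef i p]
      rw [hC, sum_le_pairs K (z i)
        (fun k k' => A k k' q r - Astar k k' q r)
        (fun a b => by
          show A a b q r - Astar a b q r = A b a q r - Astar b a q r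
          rw [hAsymm a b, hAstarsymm a b])]
      have : ∑ k : Fin K, ∑ k' : Fin K, (z i k * z i k') * (A k k' q r - Astar k k' q r)
          = (∑ k : Fin K, ∑ k' : Fin K, (z i k * z i k') * (A k k' q r))
            - ∑ k : Fin K, ∑ k' : Fin K, (z i k * z i k') * (Astar k k' q r) := by
        rw [← Finset.sum_sub_distrib]
        apply Finset.sum_congr rfl
        intro k _
        rw [← Finset.sum_sub_distrib]
        apply Finset.sum_congr rfl
        intro k' _
        ring
      rw [this, hent, sub_self]
      rfl
    have hx0 : x = 0 := mulVec_injective_of_rank N K C hCrank x hx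
    have := congrFun hx0 ⟨(k, k'), hkk'⟩
    simpa [hxdef, sub_eq_zero] using this
  intro k k'
  rcases le_total k k' with hle | hle
  · exact main k k' hle
  · rw [hAsymm k k', hAstarsymm k k']
    exact main k' k hle
end

section
/- Let Z, Z* ∈ Matrix (Fin N) (Fin K) ℝ be row-stochastic matrices each satisfying the separability condition, and let W, W* ∈ Matrix (Fin K) (Fin d) ℝ be matrices whose rows each form a linearly independent family in ℝ^d. If Z * W = Z* * W*, then there exists a permutation σ of Fin K such that for every k ∈ Fin K the k-th row of W* equals the σ(k)-th row of W, and for every i ∈ Fin N and k ∈ Fin K, Z* i k = Z i (σ k). -/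
open Matrix

private lemma row_unit {K : ℕ} (r : Fin K → ℝ) (hnn : ∀ j, 0 ≤ r j)
    (hs : ∑ j, r j = 1) {k : Fin K} (hk : r k = 1) : ∀ j, j ≠ k → r j = 0 := by
  have hadd := Finset.add_sum_erase Finset.univ r (Finset.mem_univ k)
  rw [hs, hk] at hadd
  have h0 : ∑ j ∈ Finset.univ.erase k, r j = 0 := by linarith
  intro j hj
  exact (Finset.sum_eq_zero_iff_of_nonneg (fun x _ => hnn x)).1 h0 j
    (Finset.mem_erase.2 ⟨hj, Finset.mem_univ j⟩)

private lemma coords_eq {K d : ℕ} (W : Matrix (Fin K) (Fin d) ℝ)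
    (hW : LinearIndependent ℝ (fun k : Fin K => W k)) (c c' : Fin K → ℝ)
    (h : ∀ j, ∑ m, c m * W m j = ∑ m, c' m * W m j) : c = c' := by
  have key : ∀ m, (c - c') m = 0 := by
    apply Fintype.linearIndependent_iff.mp hW
    funext j
    have : (∑ m, (c - c') m • (fun k : Fin K => W k) m) j
        = ∑ m, (c m - c' m) * W m j := by
      simp [Finset.sum_apply, smul_eq_mul]
    rw [this]
    simp [sub_mul, Finset.sum_sub_distrib, h j]
  funext m
  have := key m
  simpa [sub_eq_zero] using this

private lemma mat_cancel {K d : ℕ} (W : Matrix (Fin K) (Fin d) ℝ)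
    (hW : LinearIndependent ℝ (fun k : Fin K => W k))
    (M N : Matrix (Fin K) (Fin K) ℝ) (h : M * W = N * W) : M = N := by
  ext k l
  have hrow := coords_eq W hW (M k) (N k) (fun j => by
    have := congrFun (congrFun h k) j
    simpa [Matrix.mul_apply] using this)
  exact congrFun hrow l

/-- Separability-based identifiability of the mixed membership factorization: if `Z` and
`Z*` are row-stochastic and each satisfies the separability condition, and the rows of `W`
and `W*` are linearly independent families, then `Z W = Z* W*` forces equality up to a
permutation of the `K` feature labels. -/
theorem separability_identifiability
    (N K d : ℕ)
    (Z Zstar : Matrix (Fin N) (Fin K) ℝ)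
    (hZnonneg : ∀ i k, 0 ≤ Z i k) (hZsum : ∀ i, ∑ k : Fin K, Z i k = 1)
    (hZstarnonneg : ∀ i k, 0 ≤ Zstar i k) (hZstarsum : ∀ i, ∑ k : Fin K, Zstar i k = 1)
    (hZsep : ∀ k : Fin K, ∃ i : Fin N, Z i k = 1)
    (hZstarsep : ∀ k : Fin K, ∃ i : Fin N, Zstar i k = 1)
    (W Wstar : Matrix (Fin K) (Fin d) ℝ)
    (hW : LinearIndependent ℝ (fun k : Fin K => W k))
    (hWstar : LinearIndependent ℝ (fun k : Fin K => Wstar k))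
    (h : Z * W = Zstar * Wstar) :
    ∃ σ : Equiv.Perm (Fin K),
      (∀ k : Fin K, Wstar k = W (σ k)) ∧
      (∀ (i : Fin N) (k : Fin K), Zstar i k = Z i (σ k)) := by
  -- anchor rows
  choose iA hiA using hZstarsep
  choose iB hiB using hZsep
  set A : Matrix (Fin K) (Fin K) ℝ := fun k j => Z (iA k) j with hAdef
  set B : Matrix (Fin K) (Fin K) ℝ := fun k j => Zstar (iB k) j with hBdef
  have hAnn : ∀ k j, 0 ≤ A k j := fun k j => hZnonneg _ _
  have hBnn : ∀ k j, 0 ≤ B k j := fun k j => hZstarnonneg _ _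
  have hAsum : ∀ k, ∑ j, A k j = 1 := fun k => hZsum _
  have hBsum : ∀ k, ∑ j, B k j = 1 := fun k => hZstarsum _
  -- Wstar = A * W
  have hWstar_m : Wstar = A * W := by
    ext k j
    rw [Matrix.mul_apply]
    have h1 : (Zstar * Wstar) (iA k) j = (Z * W) (iA k) j := by rw [h]
    rw [Matrix.mul_apply, Matrix.mul_apply] at h1
    have hz : ∀ m, m ≠ k → Zstar (iA k) m = 0 :=
      row_unit _ (fun j => hZstarnonneg _ _) (hZstarsum _) (hiA k)
    have h2 : ∑ m, Zstar (iA k) m * Wstar m j = Wstar k j := by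
      rw [Finset.sum_eq_single k]
      · rw [hiA k, one_mul]
      · intro m _ hm; rw [hz m hm, zero_mul]
      · intro hk; exact absurd (Finset.mem_univ k) hk
    rw [← h2, h1]
  -- W = B * Wstar
  have hW_m : W = B * Wstar := by
    ext k j
    rw [Matrix.mul_apply]
    have h1 : (Z * W) (iB k) j = (Zstar * Wstar) (iB k) j := by rw [h]
    rw [Matrix.mul_apply, Matrix.mul_apply] at h1
    have hz : ∀ m, m ≠ k → Z (iB k) m = 0 :=
      row_unit _ (fun j => hZnonneg _ _) (hZsum _) (hiB k)
    have h2 : ∑ m, Z (iB k) m * W m j = W k j := by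
      rw [Finset.sum_eq_single k]
      · rw [hiB k, one_mul]
      · intro m _ hm; rw [hz m hm, zero_mul]
      · intro hk; exact absurd (Finset.mem_univ k) hk
    rw [← h2, h1]
  -- A * B = 1 and B * A = 1
  have hAB : A * B = 1 := by
    apply mat_cancel Wstar hWstar
    rw [Matrix.mul_assoc, ← hW_m, ← hWstar_m, Matrix.one_mul]
  have hBA : B * A = 1 := by
    apply mat_cancel W hW
    rw [Matrix.mul_assoc, ← hWstar_m, ← hW_m, Matrix.one_mul]
  -- A is a permutation matrix
  have key : ∀ k, ∃ l, ∀ l', A k l' = if l' = l then 1 else 0 := by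
    intro k
    -- find a positive entry
    have hex : ∃ l, 0 < A k l := by
      by_contra hc
      push_neg at hc
      have hz : ∑ j, A k j = 0 :=
        Finset.sum_eq_zero fun j _ => le_antisymm (hc j) (hAnn k j)
      rw [hAsum k] at hz
      norm_num at hz
    obtain ⟨l, hl⟩ := hex
    -- B l m = 0 for m ≠ k
    have hB0 : ∀ m, m ≠ k → B l m = 0 := by
      intro m hm
      have hABkm : ∑ t, A k t * B t m = 0 := by
        have := congrFun (congrFun hAB k) m
        rw [Matrix.mul_apply] at this
        rw [this, Matrix.one_apply_ne (by exact fun he => hm (he.symm ▸ rfl))]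
      have := (Finset.sum_eq_zero_iff_of_nonneg
        (fun t _ => mul_nonneg (hAnn k t) (hBnn t m))).1 hABkm l (Finset.mem_univ l)
      rcases mul_eq_zero.1 this with h' | h'
      · exact absurd h' (ne_of_gt hl)
      · exact h'
    -- B l k = 1
    have hBlk : B l k = 1 := by
      have := hBsum l
      rwa [Finset.sum_eq_single k (fun m _ hm => hB0 m hm)
        (fun hk => absurd (Finset.mem_univ k) hk)] at this
    refine ⟨l, fun l' => ?_⟩
    have hBAll' := congrFun (congrFun hBA l) l'
    rw [Matrix.mul_apply] at hBAll'
    have hsum : ∑ m, B l m * A m l' = A k l' := by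
      rw [Finset.sum_eq_single k]
      · rw [hBlk, one_mul]
      · intro m _ hm; rw [hB0 m hm, zero_mul]
      · intro hk; exact absurd (Finset.mem_univ k) hk
    rw [hsum] at hBAll'
    rw [hBAll', Matrix.one_apply]
    by_cases hll : l = l' <;> simp [hll, eq_comm]
  choose σ0 hσ0 using key
  -- σ0 is injective
  have hinj : Function.Injective σ0 := by
    intro k k' hkk'
    by_contra hne
    have hrows : A k = A k' := by
      funext l'
      rw [hσ0 k, hσ0 k', hkk']
    have h1 : (A * B) k k' = (A * B) k' k' := by
      rw [Matrix.mul_apply, Matrix.mul_apply, hrows]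
    rw [hAB, Matrix.one_apply_ne hne, Matrix.one_apply_eq] at h1
    norm_num at h1
  let σ : Equiv.Perm (Fin K) := Equiv.ofBijective σ0 (Finite.injective_iff_bijective.1 hinj)
  have hσapp : ∀ k, σ k = σ0 k := fun k => rfl
  -- first conclusion
  have hWs : ∀ k : Fin K, Wstar k = W (σ k) := by
    intro k
    funext j
    have := congrFun (congrFun hWstar_m k) j
    rw [Matrix.mul_apply] at this
    rw [this, hσapp]
    rw [Finset.sum_eq_single (σ0 k)]
    · rw [hσ0 k, if_pos rfl, one_mul]
    · intro m _ hm; rw [hσ0 k, if_neg hm, zero_mul]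
    · intro hk; exact absurd (Finset.mem_univ _) hk
  refine ⟨σ, hWs, ?_⟩
  -- second conclusion
  intro i k
  have hrow : (fun m => Z i m) = (fun m => Zstar i (σ.symm m)) := by
    apply coords_eq W hW
    intro j
    have h1 : ∑ m, Z i m * W m j = ∑ m, Zstar i m * Wstar m j := by
      have := congrFun (congrFun h i) j
      rw [Matrix.mul_apply, Matrix.mul_apply] at this
      exact this
    have h2 : ∑ m, Zstar i m * Wstar m j = ∑ m, Zstar i (σ.symm m) * W m j := by
      rw [← Equiv.sum_comp σ (fun m => Zstar i (σ.symm m) * W m j)]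
      apply Finset.sum_congr rfl
      intro m _
      rw [Equiv.symm_apply_apply, hWs m]
    rw [h1, h2]
  have := congrFun hrow (σ k)
  simpa [Equiv.symm_apply_apply] using this.symm
end
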